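/- arXiv:1411.1088 — 2 statements merged into one kernel-verified Lean document; each statement's English description precedes it below -/
import Mathlib

section
/- (Lemma 1, E-step kernel of the EM algorithm.) Let V be a real orthogonal N×N matrix with columns v_1,…,v_N, and let λ_1,…,λ_N ∈ (0,1). Define p(J) = ∏_{j∈J} λ_j ∏_{j∉J} (1−λ_j) for J ⊆ {1,…,N}, and for Y ⊆ {1,…,N} define p(Y | J) = 1(|Y| = |J|) · det([V^J (V^J)ᵀ]_Y). Let U = Vᵀ, R = diag(√(λ_j/(1−λ_j))), Z^Y = U^Y (U^Y)ᵀ, and Q^Y = R Z^Y R. Then for every fixed Y with |Y| = k and every J ⊆ {1,…,N}: p(J) · p(Y | J) = (∏_{j=1}^N (1−λ_j)) · 1(|J| = k) · det(Q^Y_J). In particular, the conditional distribution q(J | Y) ∝ p(J) p(Y | J) is a k-DPP with kernel Q^Y, i.e., q(J | Y) ∝ 1(|J| = k) det(Q^Y_J). -/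
open Matrix BigOperators

/-- Principal submatrix determinant: `det([M_{ij}]_{i,j ∈ Y})`, with `det(M_∅) = 1`. -/
noncomputable def pdet {N : ℕ} (M : Matrix (Fin N) (Fin N) ℝ) (Y : Finset (Fin N)) : ℝ :=
  (M.submatrix (fun i : Y => (i : Fin N)) (fun j : Y => (j : Fin N))).det

/-- `V^J`: the `N × |J|` submatrix of `V` consisting of the columns indexed by `J`. -/
def colSub {N : ℕ} (V : Matrix (Fin N) (Fin N) ℝ) (J : Finset (Fin N)) :
    Matrix (Fin N) J ℝ :=
  V.submatrix id (fun j : J => (j : Fin N))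

/-- Lemma 1 (E-step kernel): with `U = Vᵀ`, `R = diag(√(λ/(1-λ)))`, `Z^Y = U^Y (U^Y)ᵀ` and
`Q^Y = R Z^Y R`, the joint probability `p(J) p(Y|J)` equals
`(∏ⱼ (1-λⱼ)) ⋅ 1(|J| = k) ⋅ det(Q^Y_J)`, so that `q(J | Y) ∝ 1(|J| = k) det(Q^Y_J)`
is a `k`-DPP with kernel `Q^Y`. -/
theorem em_estep_kernel (N k : ℕ) (V : Matrix (Fin N) (Fin N) ℝ) (hV : Vᵀ * V = 1)
    (lam : Fin N → ℝ) (hlam : ∀ j, lam j ∈ Set.Ioo (0 : ℝ) 1)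
    (Y : Finset (Fin N)) (hY : Y.card = k) (J : Finset (Fin N)) :
    ((∏ j ∈ J, lam j) * ∏ j ∈ Jᶜ, (1 - lam j)) *
        ((if Y.card = J.card then (1 : ℝ) else 0) * pdet (colSub V J * (colSub V J)ᵀ) Y)
      = (∏ j : Fin N, (1 - lam j)) * (if J.card = k then (1 : ℝ) else 0) *
        pdet (Matrix.diagonal (fun j => Real.sqrt (lam j / (1 - lam j))) *
                (colSub Vᵀ Y * (colSub Vᵀ Y)ᵀ) *
              Matrix.diagonal (fun j => Real.sqrt (lam j / (1 - lam j)))) J := by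
  by_cases hcard : J.card = k
  · have h1 : Y.card = J.card := by rw [hY, hcard]
    rw [if_pos h1, if_pos hcard, mul_one, one_mul]
    -- the common rectangular matrix
    set A : Matrix Y J ℝ :=
      V.submatrix (fun y : Y => (y : Fin N)) (fun j : J => (j : Fin N)) with hA
    have hAAt : pdet (colSub V J * (colSub V J)ᵀ) Y = (A * Aᵀ).det := by
      unfold pdet
      have hsub : (colSub V J * (colSub V J)ᵀ).submatrix
          (fun i : Y => (i : Fin N)) (fun j : Y => (j : Fin N)) = A * Aᵀ := by
        ext i j
        simp [Matrix.mul_apply, colSub, hA]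
      rw [hsub]
    have hd : ∀ j : Fin N, Real.sqrt (lam j / (1 - lam j)) ^ 2 = lam j / (1 - lam j) := by
      intro j
      have h := hlam j
      have : (0:ℝ) ≤ lam j / (1 - lam j) :=
        div_nonneg (le_of_lt h.1) (by linarith [h.2])
      exact Real.sq_sqrt this
    have hAtA : pdet (Matrix.diagonal (fun j => Real.sqrt (lam j / (1 - lam j))) *
                (colSub Vᵀ Y * (colSub Vᵀ Y)ᵀ) *
              Matrix.diagonal (fun j => Real.sqrt (lam j / (1 - lam j)))) J
        = (∏ j ∈ J, lam j / (1 - lam j)) * (Aᵀ * A).det := by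
      unfold pdet
      have heq : (Matrix.diagonal (fun j => Real.sqrt (lam j / (1 - lam j))) *
                (colSub Vᵀ Y * (colSub Vᵀ Y)ᵀ) *
              Matrix.diagonal (fun j => Real.sqrt (lam j / (1 - lam j)))).submatrix
              (fun i : J => (i : Fin N)) (fun j : J => (j : Fin N))
          = Matrix.diagonal (fun j : J => Real.sqrt (lam j / (1 - lam j))) * (Aᵀ * A) *
            Matrix.diagonal (fun j : J => Real.sqrt (lam j / (1 - lam j))) := by
        ext i j
        simp only [Matrix.submatrix_apply, Matrix.mul_diagonal, Matrix.diagonal_mul]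
        simp [Matrix.mul_apply, colSub, hA, Finset.sum_mul, Finset.mul_sum]
      rw [heq, Matrix.det_mul, Matrix.det_mul, Matrix.det_diagonal]
      have : (∏ j : J, Real.sqrt (lam j / (1 - lam j))) *
          (∏ j : J, Real.sqrt (lam j / (1 - lam j)))
          = ∏ j ∈ J, lam j / (1 - lam j) := by
        rw [← Finset.prod_mul_distrib]
        rw [← Finset.prod_coe_sort J (fun j => lam j / (1 - lam j))]
        refine Finset.prod_congr rfl fun j _ => ?_
        rw [← sq]; exact hd j
      rw [← this]
      ring
    have hdet : (A * Aᵀ).det = (Aᵀ * A).det := by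
      have hc : Fintype.card J = Fintype.card Y := by
        simp [Fintype.card_coe, h1]
      let e : (J : Type) ≃ Y := Fintype.equivOfCardEq hc
      set C : Matrix J J ℝ := A.submatrix e id with hC
      have h2 : C * Cᵀ = (A * Aᵀ).submatrix e e := by
        rw [hC, Matrix.transpose_submatrix]
        exact Matrix.submatrix_mul_equiv A Aᵀ e (Equiv.refl J) e
      have h3 : Cᵀ * C = Aᵀ * A := by
        rw [hC, Matrix.transpose_submatrix]
        simpa using Matrix.submatrix_mul_equiv Aᵀ A id e id
      calc (A * Aᵀ).det = ((A * Aᵀ).submatrix e e).det :=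
              (Matrix.det_submatrix_equiv_self e _).symm
        _ = (C * Cᵀ).det := by rw [h2]
        _ = C.det * Cᵀ.det := Matrix.det_mul _ _
        _ = Cᵀ.det * C.det := mul_comm _ _
        _ = (Cᵀ * C).det := (Matrix.det_mul _ _).symm
        _ = (Aᵀ * A).det := by rw [h3]
    rw [hAAt, hAtA, hdet]
    have hscal : (∏ j ∈ J, lam j) * ∏ j ∈ Jᶜ, (1 - lam j)
        = (∏ j : Fin N, (1 - lam j)) * ∏ j ∈ J, lam j / (1 - lam j) := by
      have hsplit : (∏ j : Fin N, (1 - lam j))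
          = (∏ j ∈ J, (1 - lam j)) * ∏ j ∈ Jᶜ, (1 - lam j) := by
        rw [← Finset.prod_mul_prod_compl J]
      have key : (∏ j ∈ J, lam j)
          = (∏ j ∈ J, (1 - lam j)) * ∏ j ∈ J, lam j / (1 - lam j) := by
        rw [← Finset.prod_mul_distrib]
        refine Finset.prod_congr rfl fun j _ => ?_
        have h := hlam j
        have hne : (1:ℝ) - lam j ≠ 0 := by linarith [h.2]
        field_simp
      rw [hsplit, key]
      ring
    rw [← mul_assoc, hscal]
  · have h1 : ¬ Y.card = J.card := by rw [hY]; exact fun h => hcard h.symm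
    rw [if_neg h1, if_neg hcard]
    ring
end

section
/- (Mixture of elementary DPPs.) Let V be a real orthogonal N×N matrix with columns v_1,…,v_N, let λ_1,…,λ_N ∈ [0,1), and set L = ∑_{j=1}^N (λ_j/(1−λ_j)) v_j v_jᵀ. Then for every Y ⊆ {1,…,N}: det(L_Y)/det(L+I) = ∑_{J ⊆ {1,…,N}, |J| = |Y|} det([V^J (V^J)ᵀ]_Y) · ∏_{j∈J} λ_j · ∏_{j∉J} (1−λ_j). -/
open Matrix BigOperators

lemma det_expand {ι : Type*} [Fintype ι] [DecidableEq ι] {N : ℕ}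
    (a : Matrix ι (Fin N) ℝ) (b : Matrix (Fin N) ι ℝ) (S : Finset (Fin N)) :
    (Matrix.of fun i i' : ι => ∑ j ∈ S, a i j * b j i').det
      = ∑ r ∈ Fintype.piFinset (fun _ : ι => S),
          (∏ i, a i (r i)) * (b.submatrix r id).det := by
  have h1 : (Matrix.of fun i i' : ι => ∑ j ∈ S, a i j * b j i')
      = Matrix.of (fun i : ι => ∑ j ∈ S, a i j • b j) := by
    ext i i'
    simp [Finset.sum_apply]
  rw [h1]
  have h2 := (Matrix.detRowAlternating (R := ℝ) (n := ι)).toMultilinearMap.map_sum_finset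
    (g := fun (i : ι) (j : Fin N) => a i j • b j) (A := fun _ => S)
  show Matrix.detRowAlternating (Matrix.of (fun i : ι => ∑ j ∈ S, a i j • b j)) = _
  erw [h2]
  refine Finset.sum_congr rfl fun r _ => ?_
  have h3 := (Matrix.detRowAlternating (R := ℝ) (n := ι)).toMultilinearMap.map_smul_univ
    (fun i => a i (r i)) (fun i => b (r i))
  have h4 : (b.submatrix r id).det = Matrix.detRowAlternating (fun i => b (r i)) := rfl
  simpa [smul_eq_mul, h4] using h3

lemma regroup {ι : Type*} [Fintype ι] [DecidableEq ι] {N : ℕ}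
    (t : (ι → Fin N) → ℝ) (ht : ∀ r, ¬Function.Injective r → t r = 0) :
    ∑ r ∈ Fintype.piFinset (fun _ : ι => (Finset.univ : Finset (Fin N))), t r
      = ∑ J ∈ Finset.univ.powersetCard (Fintype.card ι),
          ∑ r ∈ Fintype.piFinset (fun _ : ι => J), t r := by
  have key : ∀ J : Finset (Fin N),
      ∑ r ∈ Fintype.piFinset (fun _ : ι => J), t r
        = ∑ r ∈ Fintype.piFinset (fun _ : ι => (Finset.univ : Finset (Fin N))),
            if ∀ i, r i ∈ J then t r else 0 := by
    intro J
    rw [← Finset.sum_filter]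
    refine (Finset.sum_congr ?_ fun _ _ => rfl)
    ext r
    simp [Fintype.mem_piFinset]
  rw [Finset.sum_congr rfl (fun J _ => key J), Finset.sum_comm]
  refine Finset.sum_congr rfl fun r _ => ?_
  by_cases hinj : Function.Injective r
  · rw [Finset.sum_eq_single (Finset.image r Finset.univ)]
    · rw [if_pos]
      intro i
      exact Finset.mem_image_of_mem r (Finset.mem_univ i)
    · intro J hJ hne
      rw [if_neg]
      intro hall
      have hsub : Finset.image r Finset.univ ⊆ J := by
        intro x hx
        obtain ⟨i, _, rfl⟩ := Finset.mem_image.mp hx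
        exact hall i
      have hcard : J.card = Fintype.card ι := (Finset.mem_powersetCard.mp hJ).2
      have : Finset.image r Finset.univ = J :=
        Finset.eq_of_subset_of_card_le hsub
          (by rw [Finset.card_image_of_injective _ hinj, Finset.card_univ, hcard])
      exact hne this.symm
    · intro h
      exact absurd (Finset.mem_powersetCard.mpr ⟨Finset.subset_univ _,
        by rw [Finset.card_image_of_injective _ hinj, Finset.card_univ]⟩) h
  · simp [ht r hinj]


/-- A DPP is a mixture of elementary DPPs: with `L = ∑ⱼ (λⱼ/(1−λⱼ)) vⱼ vⱼᵀ`,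
`det(L_Y)/det(L+I) = ∑_{|J| = |Y|} det([V^J (V^J)ᵀ]_Y) ∏_{j∈J} λⱼ ∏_{j∉J} (1−λⱼ)`. -/
theorem dpp_elementary_mixture (N : ℕ) (V : Matrix (Fin N) (Fin N) ℝ) (hV : Vᵀ * V = 1)
    (lam : Fin N → ℝ) (hlam : ∀ j, lam j ∈ Set.Ico (0 : ℝ) 1)
    (L : Matrix (Fin N) (Fin N) ℝ)
    (hLdef : L = ∑ j : Fin N,
      (lam j / (1 - lam j)) • Matrix.vecMulVec (fun i => V i j) (fun i => V i j))
    (Y : Finset (Fin N)) :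
    pdet L Y / (L + 1).det
      = ∑ J ∈ (Finset.univ : Finset (Fin N)).powersetCard Y.card,
          pdet (colSub V J * (colSub V J)ᵀ) Y *
            ((∏ j ∈ J, lam j) * ∏ j ∈ Jᶜ, (1 - lam j)) := by
  classical
  set d : Fin N → ℝ := fun j => lam j / (1 - lam j) with hd
  have h1lam : ∀ j, (1 : ℝ) - lam j ≠ 0 := fun j =>
    sub_ne_zero.mpr (ne_of_lt (hlam j).2).symm
  -- entries of L
  have hLentry : ∀ i i', L i i' = ∑ j, d j * V i j * V i' j := by
    intro i i'
    rw [hLdef]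
    simp only [Matrix.sum_apply, Matrix.smul_apply, Matrix.vecMulVec_apply, smul_eq_mul]
    exact Finset.sum_congr rfl fun j _ => by ring
  -- L as a matrix product
  have hL : L = V * Matrix.diagonal d * Vᵀ := by
    ext i i'
    rw [hLentry]
    simp only [Matrix.mul_apply, Matrix.diagonal_apply, Matrix.transpose_apply, ite_mul,
      zero_mul, Finset.sum_ite_eq, Finset.mem_univ, if_true, Finset.sum_mul]
    refine Finset.sum_congr rfl fun j _ => ?_
    try ring
    try simp [Finset.sum_ite_eq', Finset.mul_sum, mul_ite, mul_zero]
    try ring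
  have hVVt : V * Vᵀ = 1 := mul_eq_one_comm.mp hV
  -- determinant of L + 1
  have hdetV : V.det * Vᵀ.det = 1 := by
    rw [← Matrix.det_mul, hVVt, Matrix.det_one]
  have hL1 : L + 1 = V * Matrix.diagonal (fun j => d j + 1) * Vᵀ := by
    have : Matrix.diagonal (fun j => d j + 1) = Matrix.diagonal d + 1 := by
      rw [← Matrix.diagonal_one, ← Matrix.diagonal_add]
    rw [this, Matrix.mul_add, Matrix.add_mul, Matrix.mul_one, hVVt, hL]
  have hden : (L + 1).det = ∏ j, (1 - lam j)⁻¹ := by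
    rw [hL1, Matrix.det_mul, Matrix.det_mul, Matrix.det_diagonal]
    have : ∀ j, d j + 1 = (1 - lam j)⁻¹ := by
      intro j
      have := h1lam j
      rw [hd]
      field_simp
      ring
    rw [Finset.prod_congr rfl fun j _ => this j]
    rw [mul_comm V.det, mul_assoc, hdetV, mul_one]
  -- the numerator
  set a : Matrix Y (Fin N) ℝ := Matrix.of fun i j => d j * V i j with ha
  set b : Matrix (Fin N) Y ℝ := Matrix.of fun j (i' : Y) => V (i' : Fin N) j with hb
  have hvan : ∀ r : Y → Fin N, ¬Function.Injective r → (b.submatrix r id).det = 0 := by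
    intro r hr
    obtain ⟨i, i', hval, hne⟩ := Function.not_injective_iff.mp hr
    refine Matrix.det_zero_of_row_eq hne ?_
    ext x
    simp [Matrix.submatrix_apply, hb, hval]
  have hnum : pdet L Y = ∑ J ∈ Finset.univ.powersetCard Y.card,
      (∏ j ∈ J, d j) * pdet (colSub V J * (colSub V J)ᵀ) Y := by
    have e1 : pdet L Y
        = (Matrix.of fun i i' : Y => ∑ j ∈ Finset.univ, a i j * b j i').det := by
      unfold pdet
      congr 1
      ext i i'
      simp only [Matrix.submatrix_apply, Matrix.of_apply, hLentry, ha, hb]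
      try exact Finset.sum_congr rfl fun j _ => by ring
    rw [e1, det_expand a b Finset.univ,
      regroup _ (fun r hr => by rw [hvan r hr, mul_zero]), Fintype.card_coe]
    refine Finset.sum_congr rfl fun J hJ => ?_
    have hJcard : J.card = Y.card := (Finset.mem_powersetCard.mp hJ).2
    -- pull the d-product out of each term
    have e2 : ∑ r ∈ Fintype.piFinset (fun _ : Y => J),
        (∏ i, a i (r i)) * (b.submatrix r id).det
        = (∏ j ∈ J, d j) * ∑ r ∈ Fintype.piFinset (fun _ : Y => J),
            (∏ i : Y, V (i : Fin N) (r i)) * (b.submatrix r id).det := by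
      rw [Finset.mul_sum]
      refine Finset.sum_congr rfl fun r hr => ?_
      by_cases hinj : Function.Injective r
      · have himg : Finset.image r Finset.univ = J := by
          refine Finset.eq_of_subset_of_card_le ?_ ?_
          · intro x hx
            obtain ⟨i, _, rfl⟩ := Finset.mem_image.mp hx
            exact (Fintype.mem_piFinset.mp hr) i
          · rw [Finset.card_image_of_injective _ hinj, Finset.card_univ, Fintype.card_coe,
              hJcard]
        have hdprod : ∏ j ∈ J, d j = ∏ i : Y, d (r i) := by
          rw [← himg, Finset.prod_image fun x _ y _ h => hinj h]
        have : ∏ i : Y, a i (r i)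
            = (∏ i : Y, d (r i)) * ∏ i : Y, V (i : Fin N) (r i) := by
          rw [← Finset.prod_mul_distrib]
          exact Finset.prod_congr rfl fun i _ => rfl
        rw [this, hdprod]
        ring
      · rw [hvan r hinj, mul_zero, mul_zero, mul_zero]
    rw [e2]
    congr 1
    have e3 := det_expand (Matrix.of fun (i : Y) j => V (i : Fin N) j) b J
    simp only [Matrix.of_apply] at e3
    rw [← e3]
    unfold pdet colSub
    congr 1
    ext i i'
    simp only [Matrix.submatrix_apply, Matrix.of_apply, Matrix.mul_apply,
      Matrix.transpose_apply, hb, id_eq]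
    rw [← Finset.sum_coe_sort J fun j => V (i : Fin N) j * V (i' : Fin N) j]
  -- final assembly
  have hprodinv : ((∏ j, (1 - lam j)⁻¹)⁻¹ : ℝ) = ∏ j, (1 - lam j) := by
    rw [← Finset.prod_inv_distrib]
    simp
  rw [hnum, hden, div_eq_mul_inv, hprodinv, Finset.sum_mul]
  refine Finset.sum_congr rfl fun J hJ => ?_
  rw [← Finset.prod_mul_prod_compl J (fun j => 1 - lam j)]
  have : (∏ j ∈ J, d j) * ∏ j ∈ J, (1 - lam j) = ∏ j ∈ J, lam j := by
    rw [← Finset.prod_mul_distrib]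
    exact Finset.prod_congr rfl fun j _ => div_mul_cancel₀ (lam j) (h1lam j)
  calc (∏ j ∈ J, d j) * pdet (colSub V J * (colSub V J)ᵀ) Y *
        ((∏ j ∈ J, (1 - lam j)) * ∏ j ∈ Jᶜ, (1 - lam j))
      = pdet (colSub V J * (colSub V J)ᵀ) Y *
        (((∏ j ∈ J, d j) * ∏ j ∈ J, (1 - lam j)) * ∏ j ∈ Jᶜ, (1 - lam j)) := by ring
    _ = _ := by rw [this]
end
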